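/- arXiv:2510.23987 — 4 statements merged into one kernel-verified Lean document; each statement's English description precedes it below -/
import Mathlib

section
/- Suppose λ > 0 and z̃ ∈ ℂ^{r×r} is Hermitian positive definite with f(z̃) = λ·1. Let z ∈ ℂ^{d×d} denote the bottom-right d×d diagonal block of z̃ (the (3,3)-block in the decomposition ℂ^r = ℂ^d ⊕ ℂ^m ⊕ ℂ^d). Then z is positive definite, Σ_{j=1}^n aⱼ* z aⱼ < λ·1, and λ⁻¹ a₀a₀* + z⁻¹ + Σ_{i=1}^n aᵢ ( λ·1 − Σ_{j=1}^n aⱼ* z aⱼ )⁻¹ aᵢ* ≤ λ·1. -/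
noncomputable section

open scoped ComplexOrder Matrix

/-- Assemble a 3×3 block matrix over the index type `K1 ⊕ K2 ⊕ K3`. -/
def blocks3 {K1 K2 K3 : Type}
    (X11 : Matrix K1 K1 ℂ) (X12 : Matrix K1 K2 ℂ) (X13 : Matrix K1 K3 ℂ)
    (X21 : Matrix K2 K1 ℂ) (X22 : Matrix K2 K2 ℂ) (X23 : Matrix K2 K3 ℂ)
    (X31 : Matrix K3 K1 ℂ) (X32 : Matrix K3 K2 ℂ) (X33 : Matrix K3 K3 ℂ) :
    Matrix (K1 ⊕ K2 ⊕ K3) (K1 ⊕ K2 ⊕ K3) ℂ :=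
  Matrix.of fun p q =>
    match p, q with
    | .inl i, .inl j => X11 i j
    | .inl i, .inr (.inl j) => X12 i j
    | .inl i, .inr (.inr j) => X13 i j
    | .inr (.inl i), .inl j => X21 i j
    | .inr (.inl i), .inr (.inl j) => X22 i j
    | .inr (.inl i), .inr (.inr j) => X23 i j
    | .inr (.inr i), .inl j => X31 i j
    | .inr (.inr i), .inr (.inl j) => X32 i j
    | .inr (.inr i), .inr (.inr j) => X33 i j
/-- The index type realizing the block decomposition `ℂ^r = ℂ^d ⊕ ℂ^m ⊕ ℂ^d`. -/
abbrev R3 (d m : ℕ) : Type := Fin d ⊕ Fin m ⊕ Fin d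

/-- The matrix `ã₀`, with `(1,3)`-block `a₀*` and `(3,1)`-block `a₀`. -/
def tA0 {d m : ℕ} (a₀ : Matrix (Fin d) (Fin d) ℂ) : Matrix (R3 d m) (R3 d m) ℂ :=
  blocks3 0 0 a₀ᴴ 0 0 0 a₀ 0 0

/-- The matrix `ãᵢ`, with `(2,3)`-block `aᵢ*` and `(3,2)`-block `aᵢ`. -/
def tA {d m : ℕ} (ai : Matrix (Fin d) (Fin m) ℂ) : Matrix (R3 d m) (R3 d m) ℂ :=
  blocks3 0 0 0 0 0 aiᴴ 0 ai 0

/-- `f(z̃) = ã₀ + z̃⁻¹ + ∑ᵢ ãᵢ z̃ ãᵢ`. -/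
def fTilde {n d m : ℕ} (a₀ : Matrix (Fin d) (Fin d) ℂ)
    (a : Fin n → Matrix (Fin d) (Fin m) ℂ) (zt : Matrix (R3 d m) (R3 d m) ℂ) :
    Matrix (R3 d m) (R3 d m) ℂ :=
  tA0 a₀ + zt⁻¹ + ∑ i, tA (a i) * zt * tA (a i)

/-! Write `w = z̃⁻¹` and `Eₖ` for the inclusion of the `k`-th block. Comparing blocks in
`f(z̃) = λ·1` gives `w₁₁ = λ`, `w₁₃ = -a₀*`, `w₂₂ = λ - Σ aⱼ* z aⱼ` and `w₃₃ = λ - Σ aᵢ z̃₂₂ aᵢ*`.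
Everything then follows from `(Eᴴ M⁻¹ E)⁻¹ ≤ Pᴴ M P` for `M > 0` and `Eᴴ P = 1`, the difference
being `(P - Q)ᴴ M (P - Q)` with `Q = M⁻¹ E (Eᴴ M⁻¹ E)⁻¹`. Taking `M = z̃`, `E = P = E₂` gives
`w₂₂⁻¹ ≤ z̃₂₂`; taking `M = w`, `E = E₃` and `P = E₃ + λ⁻¹ E₁ a₀*` gives
`z⁻¹ ≤ w₃₃ - λ⁻¹ a₀ a₀*`. Conjugating the first inequality by `aᵢ`, summing and adding the second
gives the last claim. -/

namespace Matrix

section Submatrix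

variable {α ι κ κ' : Type*} [DecidableEq ι]

theorem submatrix_one_eq_zero [Zero α] [One α] {e : κ → ι} {f : κ' → ι}
    (hef : ∀ i j, e i ≠ f j) : (1 : Matrix ι ι α).submatrix e f = 0 := by
  ext i j; simp [one_apply_ne (hef i j)]

variable [Fintype ι] [Semiring α] [StarRing α]

theorem conjTranspose_one_submatrix_mul_mul_one_submatrix (e : κ → ι) (f : κ' → ι)
    (M : Matrix ι ι α) :
    ((1 : Matrix ι ι α).submatrix id e)ᴴ * (M * (1 : Matrix ι ι α).submatrix id f) =
      M.submatrix e f := by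
  ext; simp [mul_apply, one_apply]

theorem conjTranspose_one_submatrix_mul_one_submatrix (e : κ → ι) (f : κ' → ι) :
    ((1 : Matrix ι ι α).submatrix id e)ᴴ * (1 : Matrix ι ι α).submatrix id f =
      (1 : Matrix ι ι α).submatrix e f := by
  simpa only [Matrix.one_mul] using
    conjTranspose_one_submatrix_mul_mul_one_submatrix e f (1 : Matrix ι ι α)

theorem conjTranspose_one_submatrix_mul_mul_one_submatrix_mul {σ : Type*} [Fintype κ']
    (e : κ → ι) (f : κ' → ι) (M : Matrix ι ι α) (B : Matrix κ' σ α) :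
    ((1 : Matrix ι ι α).submatrix id e)ᴴ * (M * ((1 : Matrix ι ι α).submatrix id f * B)) =
      M.submatrix e f * B := by
  rw [← Matrix.mul_assoc M, ← Matrix.mul_assoc, conjTranspose_one_submatrix_mul_mul_one_submatrix]

end Submatrix

variable {𝕜 ι κ κ' : Type*} [RCLike 𝕜] [Fintype ι] [DecidableEq ι]

theorem PosDef.posSemidef_conjTranspose_mul_mul_sub_inv [Fintype κ] [DecidableEq κ]
    {M : Matrix ι ι 𝕜} (hM : M.PosDef) {E P : Matrix ι κ 𝕜} (hEP : Eᴴ * P = 1) :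
    (Pᴴ * M * P - (Eᴴ * M⁻¹ * E)⁻¹).PosSemidef := by
  set N := Eᴴ * M⁻¹ * E
  have hPE : Pᴴ * E = 1 := by simpa using congrArg (·ᴴ) hEP
  have hN : N.PosDef := hM.inv.conjTranspose_mul_mul_same fun x y hxy => by
    simpa [mulVec_mulVec, hPE] using congrArg (Pᴴ *ᵥ ·) hxy
  have hMdet := (isUnit_iff_isUnit_det M).mp hM.isUnit
  set Q := M⁻¹ * E * N⁻¹
  have hQ : Qᴴ = N⁻¹ * Eᴴ * M⁻¹ := by
    simp only [Q, conjTranspose_mul, hM.inv.1.eq, hN.inv.1.eq, Matrix.mul_assoc]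
  have hPQ : Pᴴ * M * Q = N⁻¹ := by
    calc Pᴴ * M * Q = Pᴴ * E * N⁻¹ := by
          simp only [Q, Matrix.mul_assoc, mul_nonsing_inv_cancel_left _ _ hMdet]
      _ = N⁻¹ := by rw [hPE, Matrix.one_mul]
  have hQP : Qᴴ * M * P = N⁻¹ := by
    simp only [hQ, Matrix.mul_assoc, nonsing_inv_mul_cancel_left _ _ hMdet, hEP, Matrix.mul_one]
  have hQQ : Qᴴ * M * Q = N⁻¹ := by
    calc Qᴴ * M * Q = N⁻¹ * N * N⁻¹ := by
          rw [hQ]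
          simp only [Q, N, Matrix.mul_assoc, nonsing_inv_mul_cancel_left _ _ hMdet]
      _ = N⁻¹ := by rw [nonsing_inv_mul _ ((isUnit_iff_isUnit_det N).mp hN.isUnit), Matrix.one_mul]
  have hsq : Pᴴ * M * P - N⁻¹ = (P - Q)ᴴ * M * (P - Q) := by
    simp only [conjTranspose_sub, Matrix.sub_mul, Matrix.mul_sub, hPQ, hQP, hQQ]
    abel
  exact hsq ▸ hM.posSemidef.conjTranspose_mul_mul_same _

theorem PosDef.posSemidef_submatrix_sub_inv_submatrix_inv [Fintype κ] [DecidableEq κ]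
    {M : Matrix ι ι 𝕜} (hM : M.PosDef) {e : κ → ι} (he : Function.Injective e) :
    (M.submatrix e e - ((M⁻¹).submatrix e e)⁻¹).PosSemidef := by
  have hE : ((1 : Matrix ι ι 𝕜).submatrix id e)ᴴ * (1 : Matrix ι ι 𝕜).submatrix id e = 1 := by
    rw [conjTranspose_one_submatrix_mul_one_submatrix, submatrix_one _ he]
  simpa only [Matrix.mul_assoc, conjTranspose_one_submatrix_mul_mul_one_submatrix] using
    hM.posSemidef_conjTranspose_mul_mul_sub_inv hE

theorem PosDef.posSemidef_submatrix_add_sub_inv_submatrix_inv [Fintype κ] [DecidableEq κ]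
    [Fintype κ'] {M : Matrix ι ι 𝕜} (hM : M.PosDef) {e : κ → ι} {f : κ' → ι}
    (he : Function.Injective e) (hef : ∀ i j, e i ≠ f j) (B : Matrix κ' κ 𝕜) :
    (M.submatrix e e + M.submatrix e f * B + Bᴴ * M.submatrix f e + Bᴴ * M.submatrix f f * B -
      ((M⁻¹).submatrix e e)⁻¹).PosSemidef := by
  have hEP : ((1 : Matrix ι ι 𝕜).submatrix id e)ᴴ *
      ((1 : Matrix ι ι 𝕜).submatrix id e + (1 : Matrix ι ι 𝕜).submatrix id f * B) = 1 := by
    rw [Matrix.mul_add, ← Matrix.mul_assoc, conjTranspose_one_submatrix_mul_one_submatrix,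
      conjTranspose_one_submatrix_mul_one_submatrix, submatrix_one _ he, submatrix_one_eq_zero hef,
      Matrix.zero_mul, add_zero]
  convert hM.posSemidef_conjTranspose_mul_mul_sub_inv hEP using 2
  · simp only [conjTranspose_add, conjTranspose_mul, Matrix.add_mul, Matrix.mul_add,
      Matrix.mul_assoc, conjTranspose_one_submatrix_mul_mul_one_submatrix,
      conjTranspose_one_submatrix_mul_mul_one_submatrix_mul]
    abel
  · rw [Matrix.mul_assoc, conjTranspose_one_submatrix_mul_mul_one_submatrix]

theorem PosDef.posSemidef_submatrix_sub_smul_sub_inv_submatrix_inv [Fintype κ] [DecidableEq κ]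
    [Fintype κ'] [DecidableEq κ'] {M : Matrix ι ι 𝕜} (hM : M.PosDef) {e : κ → ι} {f : κ' → ι}
    (he : Function.Injective e) (hef : ∀ i j, e i ≠ f j) {c : ℝ} (hc : M.submatrix f f = c • 1) :
    (M.submatrix e e - c⁻¹ • (M.submatrix e f * M.submatrix f e) -
      ((M⁻¹).submatrix e e)⁻¹).PosSemidef := by
  have hfe : (M.submatrix f e)ᴴ = M.submatrix e f := by rw [conjTranspose_submatrix, hM.1.eq]
  convert hM.posSemidef_submatrix_add_sub_inv_submatrix_inv he hef (-c⁻¹ • M.submatrix f e)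
    using 2
  simp only [conjTranspose_smul, star_trivial, hfe, hc, Matrix.mul_smul, Matrix.smul_mul,
    Matrix.mul_one, smul_smul]
  -- also for `c = 0`, where `c⁻¹ = 0`
  have hcoeff : -c⁻¹ * (c * -c⁻¹) = c⁻¹ := by
    simpa [mul_assoc] using mul_inv_mul_cancel c⁻¹
  rw [hcoeff]
  module

end Matrix

section Blocks

variable {K1 K2 K3 : Type}
  (X11 : Matrix K1 K1 ℂ) (X12 : Matrix K1 K2 ℂ) (X13 : Matrix K1 K3 ℂ)
  (X21 : Matrix K2 K1 ℂ) (X22 : Matrix K2 K2 ℂ) (X23 : Matrix K2 K3 ℂ)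
  (X31 : Matrix K3 K1 ℂ) (X32 : Matrix K3 K2 ℂ) (X33 : Matrix K3 K3 ℂ)

@[simp] theorem blocks3_submatrix_inl_inl :
    (blocks3 X11 X12 X13 X21 X22 X23 X31 X32 X33).submatrix Sum.inl Sum.inl = X11 := rfl

@[simp] theorem blocks3_submatrix_inl_inr_inr :
    (blocks3 X11 X12 X13 X21 X22 X23 X31 X32 X33).submatrix Sum.inl (Sum.inr ∘ Sum.inr) = X13 :=
  rfl

@[simp] theorem blocks3_submatrix_inr_inr_inl :
    (blocks3 X11 X12 X13 X21 X22 X23 X31 X32 X33).submatrix (Sum.inr ∘ Sum.inr) Sum.inl = X31 :=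
  rfl

@[simp] theorem blocks3_submatrix_inr_inl_inr_inl :
    (blocks3 X11 X12 X13 X21 X22 X23 X31 X32 X33).submatrix (Sum.inr ∘ Sum.inl)
      (Sum.inr ∘ Sum.inl) = X22 := rfl

@[simp] theorem blocks3_submatrix_inr_inr_inr_inr :
    (blocks3 X11 X12 X13 X21 X22 X23 X31 X32 X33).submatrix (Sum.inr ∘ Sum.inr)
      (Sum.inr ∘ Sum.inr) = X33 := rfl

end Blocks

section Reduction

variable {n d m : ℕ} {a₀ : Matrix (Fin d) (Fin d) ℂ} {a : Fin n → Matrix (Fin d) (Fin m) ℂ}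
  {zt : Matrix (R3 d m) (R3 d m) ℂ} {lam : ℝ}

theorem tA_mul_mul_tA_submatrix_inl_left {κ : Type} (ai : Matrix (Fin d) (Fin m) ℂ)
    (M : Matrix (R3 d m) (R3 d m) ℂ) (f : κ → R3 d m) :
    (tA ai * M * tA ai).submatrix Sum.inl f = 0 := by
  ext; simp [Matrix.mul_apply, tA, blocks3, Fintype.sum_sum_type]

theorem tA_mul_mul_tA_submatrix_inl_right {κ : Type} (ai : Matrix (Fin d) (Fin m) ℂ)
    (M : Matrix (R3 d m) (R3 d m) ℂ) (e : κ → R3 d m) :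
    (tA ai * M * tA ai).submatrix e Sum.inl = 0 := by
  ext; simp [Matrix.mul_apply, tA, blocks3, Fintype.sum_sum_type]

theorem tA_mul_mul_tA_submatrix_inr_inl (ai : Matrix (Fin d) (Fin m) ℂ)
    (M : Matrix (R3 d m) (R3 d m) ℂ) :
    (tA ai * M * tA ai).submatrix (Sum.inr ∘ Sum.inl) (Sum.inr ∘ Sum.inl) =
      aiᴴ * M.submatrix (Sum.inr ∘ Sum.inr) (Sum.inr ∘ Sum.inr) * ai := by
  ext; simp [Matrix.mul_apply, tA, blocks3, Fintype.sum_sum_type, Finset.sum_mul]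

theorem tA_mul_mul_tA_submatrix_inr_inr (ai : Matrix (Fin d) (Fin m) ℂ)
    (M : Matrix (R3 d m) (R3 d m) ℂ) :
    (tA ai * M * tA ai).submatrix (Sum.inr ∘ Sum.inr) (Sum.inr ∘ Sum.inr) =
      ai * M.submatrix (Sum.inr ∘ Sum.inl) (Sum.inr ∘ Sum.inl) * aiᴴ := by
  ext; simp [Matrix.mul_apply, tA, blocks3, Fintype.sum_sum_type, Finset.sum_mul]

theorem submatrix_fTilde {κ κ' : Type} (e : κ → R3 d m) (f : κ' → R3 d m) :
    (fTilde a₀ a zt).submatrix e f = (tA0 a₀).submatrix e f + (zt⁻¹).submatrix e f +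
      ∑ i, (tA (a i) * zt * tA (a i)).submatrix e f := by
  ext; simp [fTilde, Matrix.sum_apply]

theorem inv_submatrix_inl_inl_of_fTilde_eq (hf : fTilde a₀ a zt = lam • 1) :
    (zt⁻¹).submatrix Sum.inl Sum.inl = lam • 1 := by
  simpa [submatrix_fTilde, tA0, tA_mul_mul_tA_submatrix_inl_left, Matrix.submatrix_smul,
    Pi.smul_apply, Matrix.submatrix_one _ Sum.inl_injective] using
    congrArg (·.submatrix Sum.inl Sum.inl) hf

theorem inv_submatrix_inl_inr_inr_of_fTilde_eq (hf : fTilde a₀ a zt = lam • 1) :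
    (zt⁻¹).submatrix Sum.inl (Sum.inr ∘ Sum.inr) = -a₀ᴴ := by
  refine eq_neg_of_add_eq_zero_right ?_
  simpa [submatrix_fTilde, tA0, tA_mul_mul_tA_submatrix_inl_left, Matrix.submatrix_smul,
    Pi.smul_apply, Matrix.submatrix_one_eq_zero] using
    congrArg (·.submatrix Sum.inl (Sum.inr ∘ Sum.inr)) hf

theorem inv_submatrix_inr_inr_inl_of_fTilde_eq (hf : fTilde a₀ a zt = lam • 1) :
    (zt⁻¹).submatrix (Sum.inr ∘ Sum.inr) Sum.inl = -a₀ := by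
  refine eq_neg_of_add_eq_zero_right ?_
  simpa [submatrix_fTilde, tA0, tA_mul_mul_tA_submatrix_inl_right, Matrix.submatrix_smul,
    Pi.smul_apply, Matrix.submatrix_one_eq_zero] using
    congrArg (·.submatrix (Sum.inr ∘ Sum.inr) Sum.inl) hf

theorem inv_submatrix_inr_inl_of_fTilde_eq (hf : fTilde a₀ a zt = lam • 1) :
    (zt⁻¹).submatrix (Sum.inr ∘ Sum.inl) (Sum.inr ∘ Sum.inl) =
      lam • 1 - ∑ j, (a j)ᴴ * zt.submatrix (Sum.inr ∘ Sum.inr) (Sum.inr ∘ Sum.inr) * a j := by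
  refine eq_sub_of_add_eq ?_
  simpa only [submatrix_fTilde, tA0, tA_mul_mul_tA_submatrix_inr_inl, Matrix.submatrix_smul,
    Pi.smul_apply, Matrix.submatrix_one _ (Sum.inr_injective.comp Sum.inl_injective),
    blocks3_submatrix_inr_inl_inr_inl, zero_add] using
    congrArg (·.submatrix (Sum.inr ∘ Sum.inl) (Sum.inr ∘ Sum.inl)) hf

theorem inv_submatrix_inr_inr_of_fTilde_eq (hf : fTilde a₀ a zt = lam • 1) :
    (zt⁻¹).submatrix (Sum.inr ∘ Sum.inr) (Sum.inr ∘ Sum.inr) =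
      lam • 1 - ∑ i, a i * zt.submatrix (Sum.inr ∘ Sum.inl) (Sum.inr ∘ Sum.inl) * (a i)ᴴ := by
  refine eq_sub_of_add_eq ?_
  simpa only [submatrix_fTilde, tA0, tA_mul_mul_tA_submatrix_inr_inr, Matrix.submatrix_smul,
    Pi.smul_apply, Matrix.submatrix_one _ (Sum.inr_injective.comp Sum.inr_injective),
    blocks3_submatrix_inr_inr_inr_inr, zero_add] using
    congrArg (·.submatrix (Sum.inr ∘ Sum.inr) (Sum.inr ∘ Sum.inr)) hf

end Reduction

theorem schur_reduction_upper_general (n d m : ℕ)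
    (a₀ : Matrix (Fin d) (Fin d) ℂ) (a : Fin n → Matrix (Fin d) (Fin m) ℂ)
    (lam : ℝ)
    (zt : Matrix (R3 d m) (R3 d m) ℂ) (hzt : zt.PosDef)
    (hf : fTilde a₀ a zt = lam • 1)
    (z : Matrix (Fin d) (Fin d) ℂ)
    (hz : z = zt.submatrix (Sum.inr ∘ Sum.inr) (Sum.inr ∘ Sum.inr)) :
    z.PosDef ∧
    (lam • 1 - ∑ j, (a j)ᴴ * z * a j).PosDef ∧
    (lam • 1 - (lam⁻¹ • (a₀ * a₀ᴴ) + z⁻¹ +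
      ∑ i, a i * (lam • 1 - ∑ j, (a j)ᴴ * z * a j)⁻¹ * (a i)ᴴ)).PosSemidef := by
  subst hz
  have he₂ : Function.Injective (Sum.inr ∘ Sum.inl : Fin m → R3 d m) :=
    Sum.inr_injective.comp Sum.inl_injective
  have he₃ : Function.Injective (Sum.inr ∘ Sum.inr : Fin d → R3 d m) :=
    Sum.inr_injective.comp Sum.inr_injective
  rw [← inv_submatrix_inr_inl_of_fTilde_eq hf]
  refine ⟨hzt.submatrix he₃, hzt.inv.submatrix he₂, ?_⟩
  have hschur := hzt.inv.posSemidef_submatrix_sub_smul_sub_inv_submatrix_inv he₃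
    (fun _ _ => Sum.inr_ne_inl) (inv_submatrix_inl_inl_of_fTilde_eq hf)
  rw [inv_submatrix_inr_inr_of_fTilde_eq hf, inv_submatrix_inr_inr_inl_of_fTilde_eq hf,
    inv_submatrix_inl_inr_inr_of_fTilde_eq hf,
    Matrix.nonsing_inv_nonsing_inv _ ((Matrix.isUnit_iff_isUnit_det zt).mp hzt.isUnit)] at hschur
  have hterms i :=
    (hzt.posSemidef_submatrix_sub_inv_submatrix_inv he₂).mul_mul_conjTranspose_same (a i)
  refine Eq.mp (congrArg Matrix.PosSemidef ?_)
    (hschur.add (Matrix.posSemidef_sum Finset.univ fun i _ => hterms i))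
  simp only [Matrix.mul_sub, Matrix.sub_mul, Finset.sum_sub_distrib, neg_mul_neg]
  abel

/-- Lemma 3.3: consequences of the identity `f(z̃) = λ·1` for the bottom-right block `z`
of a positive definite `z̃`. -/
theorem schur_reduction_upper (n d m : ℕ)
    (a₀ : Matrix (Fin d) (Fin d) ℂ) (a : Fin n → Matrix (Fin d) (Fin m) ℂ)
    (lam : ℝ) (hlam : 0 < lam)
    (zt : Matrix (R3 d m) (R3 d m) ℂ) (hzt : zt.PosDef)
    (hf : fTilde a₀ a zt = lam • 1)
    (z : Matrix (Fin d) (Fin d) ℂ)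
    (hz : z = zt.submatrix (Sum.inr ∘ Sum.inr) (Sum.inr ∘ Sum.inr)) :
    z.PosDef ∧
    (lam • 1 - ∑ j, (a j)ᴴ * z * a j).PosDef ∧
    (lam • 1 - (lam⁻¹ • (a₀ * a₀ᴴ) + z⁻¹ +
      ∑ i, a i * (lam • 1 - ∑ j, (a j)ᴴ * z * a j)⁻¹ * (a i)ᴴ)).PosSemidef :=
  schur_reduction_upper_general n d m a₀ a lam zt hzt hf z hz
end
end

section
/- Let λ > 0 and let z ∈ ℂ^{d×d} be Hermitian positive definite with Σ_{j=1}^n aⱼ* z aⱼ < λ·1. Define g(λ;z) ∈ ℂ^{r×r} as the Hermitian matrix with (1,1)-block λ⁻¹·1 + λ⁻² a₀* z a₀, (1,3)-block λ⁻¹ a₀* z, (3,1)-block λ⁻¹ z a₀, (2,2)-block (λ·1 − Σ_{j=1}^n aⱼ* z aⱼ)⁻¹, (3,3)-block z, and all other blocks zero. Then g(λ;z) is positive definite, and f(g(λ;z)) is the block-diagonal matrix with diagonal blocks λ·1_d, λ·1_m, and λ⁻¹ a₀a₀* + z⁻¹ + Σ_{i=1}^n aᵢ ( λ·1 − Σ_{j=1}^n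 aⱼ* z aⱼ )⁻¹ aᵢ*. -/
noncomputable section

open scoped ComplexOrder Matrix

/-!
`g(λ;z) = Lᴴ D L` with `L` the block unit lower triangular matrix carrying `λ⁻¹ a₀` in its
`(3,1)`-block and `D = diag(λ⁻¹·1, (λ·1 − ∑ⱼ aⱼ* z aⱼ)⁻¹, z)`, so `g(λ;z)` is positive definite as a
congruence of a positive definite block diagonal matrix. Its inverse is explicit and is checked
block by block; the terms `ãᵢ g ãᵢ` only see the `(2,2)`- and `(3,3)`-blocks of `g`, and the
`(2,2)`-block of `f(g)` collapses to `λ·1` because `(λ·1 − ∑ⱼ aⱼ* z aⱼ) + ∑ⱼ aⱼ* z aⱼ = λ·1`.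
-/

open Matrix

theorem Matrix.PosDef.fromBlocks_zero_zero {R k l : Type*} [Ring R] [PartialOrder R] [StarRing R]
    [IsOrderedAddMonoid R] [Fintype k] [Fintype l] {A : Matrix k k R} {D : Matrix l l R}
    (hA : A.PosDef) (hD : D.PosDef) : (fromBlocks A 0 0 D).PosDef := by
  refine .of_dotProduct_mulVec_pos ?_ fun x hx => ?_
  · simp [IsHermitian, fromBlocks_conjTranspose, hA.1.eq, hD.1.eq]
  have hsplit : star x ⬝ᵥ fromBlocks A 0 0 D *ᵥ x =
      star (x ∘ Sum.inl) ⬝ᵥ A *ᵥ (x ∘ Sum.inl) + star (x ∘ Sum.inr) ⬝ᵥ D *ᵥ (x ∘ Sum.inr) := by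
    simp [fromBlocks_mulVec, dotProduct, Fintype.sum_sum_type, Function.comp_def]
  rw [hsplit]
  by_cases hl : x ∘ Sum.inl = 0
  · have hr : x ∘ Sum.inr ≠ 0 := fun hr => hx <| funext fun
      | .inl i => congrFun hl i
      | .inr i => congrFun hr i
    exact add_pos_of_nonneg_of_pos (hA.posSemidef.dotProduct_mulVec_nonneg _)
      (hD.dotProduct_mulVec_pos hr)
  · exact add_pos_of_pos_of_nonneg (hA.dotProduct_mulVec_pos hl)
      (hD.posSemidef.dotProduct_mulVec_nonneg _)

section Blocks3

variable {K1 K2 K3 : Type}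

theorem blocks3_add (A11 : Matrix K1 K1 ℂ) (A12 : Matrix K1 K2 ℂ) (A13 : Matrix K1 K3 ℂ)
    (A21 : Matrix K2 K1 ℂ) (A22 : Matrix K2 K2 ℂ) (A23 : Matrix K2 K3 ℂ)
    (A31 : Matrix K3 K1 ℂ) (A32 : Matrix K3 K2 ℂ) (A33 : Matrix K3 K3 ℂ)
    (B11 : Matrix K1 K1 ℂ) (B12 : Matrix K1 K2 ℂ) (B13 : Matrix K1 K3 ℂ)
    (B21 : Matrix K2 K1 ℂ) (B22 : Matrix K2 K2 ℂ) (B23 : Matrix K2 K3 ℂ)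
    (B31 : Matrix K3 K1 ℂ) (B32 : Matrix K3 K2 ℂ) (B33 : Matrix K3 K3 ℂ) :
    blocks3 A11 A12 A13 A21 A22 A23 A31 A32 A33 + blocks3 B11 B12 B13 B21 B22 B23 B31 B32 B33 =
      blocks3 (A11 + B11) (A12 + B12) (A13 + B13) (A21 + B21) (A22 + B22) (A23 + B23)
        (A31 + B31) (A32 + B32) (A33 + B33) := by
  ext (i | i | i) (j | j | j) <;> rfl

theorem blocks3_sum {ι : Type*} (s : Finset ι)
    (f11 : ι → Matrix K1 K1 ℂ) (f12 : ι → Matrix K1 K2 ℂ) (f13 : ι → Matrix K1 K3 ℂ)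
    (f21 : ι → Matrix K2 K1 ℂ) (f22 : ι → Matrix K2 K2 ℂ) (f23 : ι → Matrix K2 K3 ℂ)
    (f31 : ι → Matrix K3 K1 ℂ) (f32 : ι → Matrix K3 K2 ℂ) (f33 : ι → Matrix K3 K3 ℂ) :
    ∑ i ∈ s, blocks3 (f11 i) (f12 i) (f13 i) (f21 i) (f22 i) (f23 i) (f31 i) (f32 i) (f33 i) =
      blocks3 (∑ i ∈ s, f11 i) (∑ i ∈ s, f12 i) (∑ i ∈ s, f13 i) (∑ i ∈ s, f21 i)
        (∑ i ∈ s, f22 i) (∑ i ∈ s, f23 i) (∑ i ∈ s, f31 i) (∑ i ∈ s, f32 i) (∑ i ∈ s, f33 i) := by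
  ext (i | i | i) (j | j | j) <;> simp [blocks3, Matrix.sum_apply]

theorem blocks3_conjTranspose (A11 : Matrix K1 K1 ℂ) (A12 : Matrix K1 K2 ℂ)
    (A13 : Matrix K1 K3 ℂ) (A21 : Matrix K2 K1 ℂ) (A22 : Matrix K2 K2 ℂ) (A23 : Matrix K2 K3 ℂ)
    (A31 : Matrix K3 K1 ℂ) (A32 : Matrix K3 K2 ℂ) (A33 : Matrix K3 K3 ℂ) :
    (blocks3 A11 A12 A13 A21 A22 A23 A31 A32 A33)ᴴ =
      blocks3 A11ᴴ A21ᴴ A31ᴴ A12ᴴ A22ᴴ A32ᴴ A13ᴴ A23ᴴ A33ᴴ := by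
  ext (i | i | i) (j | j | j) <;> rfl

theorem blocks3_diag_eq_fromBlocks (X : Matrix K1 K1 ℂ) (Y : Matrix K2 K2 ℂ)
    (Z : Matrix K3 K3 ℂ) :
    blocks3 X 0 0 0 Y 0 0 0 Z = fromBlocks X 0 0 (fromBlocks Y 0 0 Z) := by
  ext (i | i | i) (j | j | j) <;> rfl

theorem blocks3_one [DecidableEq K1] [DecidableEq K2] [DecidableEq K3] :
    blocks3 1 0 0 0 1 0 0 0 1 = (1 : Matrix (K1 ⊕ K2 ⊕ K3) (K1 ⊕ K2 ⊕ K3) ℂ) := by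
  rw [blocks3_diag_eq_fromBlocks, fromBlocks_one, fromBlocks_one]

variable [Fintype K1] [Fintype K2] [Fintype K3]

theorem blocks3_mul (A11 : Matrix K1 K1 ℂ) (A12 : Matrix K1 K2 ℂ) (A13 : Matrix K1 K3 ℂ)
    (A21 : Matrix K2 K1 ℂ) (A22 : Matrix K2 K2 ℂ) (A23 : Matrix K2 K3 ℂ)
    (A31 : Matrix K3 K1 ℂ) (A32 : Matrix K3 K2 ℂ) (A33 : Matrix K3 K3 ℂ)
    (B11 : Matrix K1 K1 ℂ) (B12 : Matrix K1 K2 ℂ) (B13 : Matrix K1 K3 ℂ)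
    (B21 : Matrix K2 K1 ℂ) (B22 : Matrix K2 K2 ℂ) (B23 : Matrix K2 K3 ℂ)
    (B31 : Matrix K3 K1 ℂ) (B32 : Matrix K3 K2 ℂ) (B33 : Matrix K3 K3 ℂ) :
    blocks3 A11 A12 A13 A21 A22 A23 A31 A32 A33 * blocks3 B11 B12 B13 B21 B22 B23 B31 B32 B33 =
      blocks3 (A11 * B11 + A12 * B21 + A13 * B31) (A11 * B12 + A12 * B22 + A13 * B32)
        (A11 * B13 + A12 * B23 + A13 * B33) (A21 * B11 + A22 * B21 + A23 * B31)
        (A21 * B12 + A22 * B22 + A23 * B32) (A21 * B13 + A22 * B23 + A23 * B33)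
        (A31 * B11 + A32 * B21 + A33 * B31) (A31 * B12 + A32 * B22 + A33 * B32)
        (A31 * B13 + A32 * B23 + A33 * B33) := by
  ext (i | i | i) (j | j | j) <;>
    simp [blocks3, mul_apply, Fintype.sum_sum_type, add_assoc]

theorem Matrix.PosDef.blocks3_diag {X : Matrix K1 K1 ℂ} {Y : Matrix K2 K2 ℂ}
    {Z : Matrix K3 K3 ℂ} (hX : X.PosDef) (hY : Y.PosDef) (hZ : Z.PosDef) :
    (blocks3 X 0 0 0 Y 0 0 0 Z).PosDef :=
  blocks3_diag_eq_fromBlocks X Y Z ▸ hX.fromBlocks_zero_zero (hY.fromBlocks_zero_zero hZ)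

variable [DecidableEq K1] [DecidableEq K2] [DecidableEq K3]

theorem isUnit_blocks3_lower (C : Matrix K3 K1 ℂ) :
    IsUnit (blocks3 (1 : Matrix K1 K1 ℂ) 0 0 0 (1 : Matrix K2 K2 ℂ) 0 C 0 1) := by
  refine isUnit_iff_exists_inv'.2 ⟨blocks3 1 0 0 0 1 0 (-C) 0 1, ?_⟩
  rw [blocks3_mul, ← blocks3_one]
  simp

/-- The matrix `g(λ;z)`, with its `(2,2)`-block `(λ·1 − ∑ⱼ aⱼ* z aⱼ)⁻¹` left as a parameter `V`. -/
def gMatrix (lam : ℝ) (a₀ : Matrix K3 K1 ℂ) (z : Matrix K3 K3 ℂ) (V : Matrix K2 K2 ℂ) :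
    Matrix (K1 ⊕ K2 ⊕ K3) (K1 ⊕ K2 ⊕ K3) ℂ :=
  blocks3 (lam⁻¹ • 1 + (lam ^ 2)⁻¹ • (a₀ᴴ * z * a₀)) 0 (lam⁻¹ • (a₀ᴴ * z))
    0 V 0
    (lam⁻¹ • (z * a₀)) 0 z

theorem gMatrix_eq_conjTranspose_mul_mul (lam : ℝ) (a₀ : Matrix K3 K1 ℂ) (z : Matrix K3 K3 ℂ)
    (V : Matrix K2 K2 ℂ) :
    gMatrix lam a₀ z V = (blocks3 1 0 0 0 1 0 (lam⁻¹ • a₀) 0 1)ᴴ *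
      blocks3 (lam⁻¹ • 1) 0 0 0 V 0 0 0 z * blocks3 1 0 0 0 1 0 (lam⁻¹ • a₀) 0 1 := by
  rw [gMatrix, blocks3_conjTranspose, blocks3_mul, blocks3_mul]
  congr 1 <;> simp [Matrix.mul_assoc, smul_smul, sq]

theorem posDef_gMatrix {lam : ℝ} (hlam : 0 < lam) (a₀ : Matrix K3 K1 ℂ) {z : Matrix K3 K3 ℂ}
    (hz : z.PosDef) {V : Matrix K2 K2 ℂ} (hV : V.PosDef) : (gMatrix lam a₀ z V).PosDef := by
  rw [gMatrix_eq_conjTranspose_mul_mul, ← star_eq_conjTranspose,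
    IsUnit.posDef_star_left_conjugate_iff (isUnit_blocks3_lower _)]
  exact (PosDef.one.smul (inv_pos.mpr hlam)).blocks3_diag hV hz

theorem inv_gMatrix {lam : ℝ} (hlam : lam ≠ 0) (a₀ : Matrix K3 K1 ℂ) {z : Matrix K3 K3 ℂ}
    (hz : IsUnit z.det) {W : Matrix K2 K2 ℂ} (hW : IsUnit W.det) :
    (gMatrix lam a₀ z W⁻¹)⁻¹ =
      blocks3 (lam • 1) 0 (-a₀ᴴ) 0 W 0 (-a₀) 0 (lam⁻¹ • (a₀ * a₀ᴴ) + z⁻¹) := by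
  refine inv_eq_left_inv ?_
  rw [gMatrix, blocks3_mul, ← blocks3_one]
  congr 1
  all_goals simp only [Matrix.mul_zero, Matrix.zero_mul, add_zero, zero_add, Matrix.mul_one,
    Matrix.one_mul, Matrix.smul_mul, Matrix.mul_smul, smul_smul, Matrix.neg_mul,
    Matrix.mul_add, Matrix.add_mul, Matrix.mul_assoc, smul_add, smul_neg, smul_zero,
    mul_nonsing_inv _ hW, nonsing_inv_mul _ hz, nonsing_inv_mul_cancel_left _ _ hz]
  all_goals match_scalars <;> field_simp <;> ring

end Blocks3

theorem tA_mul_blocks3_mul_tA {d m : ℕ} (b : Matrix (Fin d) (Fin m) ℂ)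
    (X11 : Matrix (Fin d) (Fin d) ℂ) (X12 : Matrix (Fin d) (Fin m) ℂ)
    (X13 : Matrix (Fin d) (Fin d) ℂ) (X21 : Matrix (Fin m) (Fin d) ℂ)
    (X22 : Matrix (Fin m) (Fin m) ℂ) (X23 : Matrix (Fin m) (Fin d) ℂ)
    (X31 : Matrix (Fin d) (Fin d) ℂ) (X32 : Matrix (Fin d) (Fin m) ℂ)
    (X33 : Matrix (Fin d) (Fin d) ℂ) :
    tA b * blocks3 X11 X12 X13 X21 X22 X23 X31 X32 X33 * tA b =
      blocks3 0 0 0 0 (bᴴ * X33 * b) (bᴴ * X32 * bᴴ) 0 (b * X23 * b) (b * X22 * bᴴ) := by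
  rw [tA, blocks3_mul, blocks3_mul]
  congr 1 <;> simp [Matrix.mul_assoc]

theorem fTilde_gMatrix {n d m : ℕ} {lam : ℝ} (hlam : lam ≠ 0) (a₀ : Matrix (Fin d) (Fin d) ℂ)
    (a : Fin n → Matrix (Fin d) (Fin m) ℂ) {z : Matrix (Fin d) (Fin d) ℂ} (hz : IsUnit z.det)
    {W : Matrix (Fin m) (Fin m) ℂ} (hW : IsUnit W.det) :
    fTilde a₀ a (gMatrix lam a₀ z W⁻¹) =
      blocks3 (lam • 1) 0 0 0 (W + ∑ i, (a i)ᴴ * z * a i) 0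
        0 0 (lam⁻¹ • (a₀ * a₀ᴴ) + z⁻¹ + ∑ i, a i * W⁻¹ * (a i)ᴴ) := by
  rw [fTilde, inv_gMatrix hlam a₀ hz hW]
  simp_rw [gMatrix, tA_mul_blocks3_mul_tA]
  rw [tA0, blocks3_sum, blocks3_add, blocks3_add]
  congr 1 <;> simp

/-- Lemma 3.4: the explicit matrix `g(λ;z)` is positive definite and `f(g(λ;z))` is
block diagonal with diagonal blocks `λ·1_d`, `λ·1_m` and
`λ⁻¹ a₀a₀* + z⁻¹ + ∑ᵢ aᵢ (λ·1 − ∑ⱼ aⱼ* z aⱼ)⁻¹ aᵢ*`. -/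
theorem value_reduction_upper (n d m : ℕ)
    (a₀ : Matrix (Fin d) (Fin d) ℂ) (a : Fin n → Matrix (Fin d) (Fin m) ℂ)
    (lam : ℝ) (hlam : 0 < lam)
    (z : Matrix (Fin d) (Fin d) ℂ) (hz : z.PosDef)
    (hza : (lam • 1 - ∑ j, (a j)ᴴ * z * a j).PosDef)
    (g : Matrix (R3 d m) (R3 d m) ℂ)
    (hg : g = blocks3
      (lam⁻¹ • 1 + (lam ^ 2)⁻¹ • (a₀ᴴ * z * a₀)) 0 (lam⁻¹ • (a₀ᴴ * z))
      0 ((lam • 1 - ∑ j, (a j)ᴴ * z * a j)⁻¹) 0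
      (lam⁻¹ • (z * a₀)) 0 z) :
    g.PosDef ∧
    fTilde a₀ a g = blocks3
      (lam • 1) 0 0
      0 (lam • 1) 0
      0 0 (lam⁻¹ • (a₀ * a₀ᴴ) + z⁻¹ +
        ∑ i, a i * (lam • 1 - ∑ j, (a j)ᴴ * z * a j)⁻¹ * (a i)ᴴ) := by
  obtain rfl : g = gMatrix lam a₀ z (lam • 1 - ∑ j, (a j)ᴴ * z * a j)⁻¹ := hg
  refine ⟨posDef_gMatrix hlam a₀ hz hza.inv, ?_⟩
  rw [fTilde_gMatrix hlam.ne' a₀ a ((isUnit_iff_isUnit_det z).mp hz.isUnit)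
    ((isUnit_iff_isUnit_det _).mp hza.isUnit), sub_add_cancel]
end
end

section
/- Assume a₀ ∈ ℂ^{d×d} is invertible. Let λ > 0 and let Z ∈ ℂ^{s×s} be Hermitian with Z > 0, Z⁻¹ − A₀ > 0, and F(Z) = λ·1. Let z ∈ ℂ^{d×d} denote the bottom-right d×d diagonal block of Z (the (3,3)-block in the decomposition ℂ^s = ℂ^d ⊕ ℂ^{2nd} ⊕ ℂ^d). Then z is positive definite with z⁻¹ > (1/λ)·a₀a₀*/(n+1); moreover Σ_{j=1}^n Nⱼ* z Nⱼ < λ·1, and z⁻¹ + Σ_{i=1}^n Mᵢ ( λ·1 − Σ_{j=1}^n Nⱼ* z Nⱼ )⁻¹ Mᵢ* ≤ λ·1. -/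
noncomputable section

open scoped ComplexOrder Matrix

/-- The index type realizing the block decomposition `ℂ^s = ℂ^d ⊕ ℂ^{2nd} ⊕ ℂ^d`. -/
abbrev S3 (n d : ℕ) : Type := Fin d ⊕ Fin (2 * n * d) ⊕ Fin d

/-- The matrix `A₀`, with `(1,3)`-block `a₀*/√(n+1)` and `(3,1)`-block `a₀/√(n+1)`. -/
def lowA0 (n : ℕ) {d : ℕ} (a₀ : Matrix (Fin d) (Fin d) ℂ) : Matrix (S3 n d) (S3 n d) ℂ :=
  blocks3 0 0 ((Real.sqrt ((n : ℝ) + 1))⁻¹ • a₀ᴴ) 0 0 0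
    ((Real.sqrt ((n : ℝ) + 1))⁻¹ • a₀) 0 0

/-- The matrix `Aᵢ`, with `(2,3)`-block `Mᵢ*` and `(3,2)`-block `Nᵢ`. -/
def lowA {n d : ℕ} (Mi Ni : Matrix (Fin d) (Fin (2 * n * d)) ℂ) :
    Matrix (S3 n d) (S3 n d) ℂ :=
  blocks3 0 0 0 0 0 Miᴴ 0 Ni 0

/-- `F(Z) = Z⁻¹ + ∑ᵢ Aᵢ* Z Aᵢ`. -/
def lowF {n d : ℕ} (M N : Fin n → Matrix (Fin d) (Fin (2 * n * d)) ℂ)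
    (Z : Matrix (S3 n d) (S3 n d) ℂ) : Matrix (S3 n d) (S3 n d) ℂ :=
  Z⁻¹ + ∑ i, (lowA (M i) (N i))ᴴ * Z * lowA (M i) (N i)

/-!
Reading `F(Z) = λ·1` blockwise shows that `Z⁻¹ = diag(λ·1, Y)` is block diagonal, with
`Y₁₁ = λ·1 - ∑ⱼ Nⱼ* z Nⱼ` and `Y₂₂ = λ·1 - ∑ᵢ Mᵢ P Mᵢ*`, where `P` and `z` are the diagonal
blocks of `Z₂₂ = Y⁻¹`. Block inversion of the positive definite `Y` gives the Schur complement
`z⁻¹ = Y/Y₁₁ ≤ Y₂₂` and `P ≥ Y₁₁⁻¹`, which together yield the last inequality. The bound on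
`z⁻¹` comes from taking the Schur complement of `Z⁻¹ - A₀` twice: the first one removes the
`λ·1` corner and subtracts `a₀a₀*/(λ(n+1))` from the last block, the second turns `Y` into `z⁻¹`.
-/

namespace Matrix

section Blocks

variable {R α : Type*} {k l m p : Type*}

theorem fromBlocks_sub [Sub α] (A A' : Matrix m m α) (B B' : Matrix m p α)
    (C C' : Matrix p m α) (D D' : Matrix p p α) :
    fromBlocks A B C D - fromBlocks A' B' C' D' =
      fromBlocks (A - A') (B - B') (C - C') (D - D') := by
  ext (i | i) (j | j) <;> rfl

theorem sum_fromBlocks [AddCommMonoid α] {ι : Type*} (s : Finset ι) (A : ι → Matrix m m α)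
    (B : ι → Matrix m p α) (C : ι → Matrix p m α) (D : ι → Matrix p p α) :
    ∑ i ∈ s, fromBlocks (A i) (B i) (C i) (D i) =
      fromBlocks (∑ i ∈ s, A i) (∑ i ∈ s, B i) (∑ i ∈ s, C i) (∑ i ∈ s, D i) := by
  ext (i | i) (j | j) <;> simp [Matrix.sum_apply]

theorem smul_one_eq_fromBlocks [Zero α] [One α] [SMulZeroClass R α] [DecidableEq m]
    [DecidableEq p] (c : R) :
    (c • 1 : Matrix (m ⊕ p) (m ⊕ p) α) = fromBlocks (c • 1) 0 0 (c • 1) := by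
  ext (i | i) (j | j) <;> simp [one_apply]

variable [Semiring α] [StarRing α] [Fintype k] [Fintype l] [Fintype m] [Fintype p]

theorem conjTranspose_fromBlocks_zero_mul_mul (a : Matrix p p α)
    (X : Matrix (m ⊕ p) (m ⊕ p) α) :
    (fromBlocks 0 0 0 a)ᴴ * X * fromBlocks 0 0 0 a =
      fromBlocks 0 0 0 (aᴴ * X.toBlocks₂₂ * a) := by
  rw [← fromBlocks_toBlocks X]
  simp [fromBlocks_conjTranspose, fromBlocks_multiply]

theorem conjTranspose_antidiag_mul_mul (M N : Matrix k l α) (W : Matrix (l ⊕ k) (l ⊕ k) α) :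
    (fromBlocks 0 Mᴴ N 0)ᴴ * W * fromBlocks 0 Mᴴ N 0 =
      fromBlocks (Nᴴ * W.toBlocks₂₂ * N) (Nᴴ * W.toBlocks₂₁ * Mᴴ)
        (M * W.toBlocks₁₂ * N) (M * W.toBlocks₁₁ * Mᴴ) := by
  rw [← fromBlocks_toBlocks W]
  simp [fromBlocks_conjTranspose, fromBlocks_multiply, Matrix.mul_assoc]

end Blocks

section SchurComplement

variable {α : Type*} [CommRing α] {m p : Type*} [Fintype m] [DecidableEq m]

def schurCompl (X : Matrix (m ⊕ p) (m ⊕ p) α) : Matrix p p α :=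
  X.toBlocks₂₂ - X.toBlocks₂₁ * X.toBlocks₁₁⁻¹ * X.toBlocks₁₂

theorem schurCompl_fromBlocks (A : Matrix m m α) (B : Matrix m p α) (C : Matrix p m α)
    (D : Matrix p p α) : schurCompl (fromBlocks A B C D) = D - C * A⁻¹ * B := by
  simp only [schurCompl, toBlocks_fromBlocks₁₁, toBlocks_fromBlocks₁₂, toBlocks_fromBlocks₂₁,
    toBlocks_fromBlocks₂₂]

theorem schurCompl_sub_fromBlocks_zero (X : Matrix (m ⊕ p) (m ⊕ p) α) (E : Matrix p p α) :
    schurCompl (X - fromBlocks 0 0 0 E) = X.schurCompl - E := by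
  rw [← fromBlocks_toBlocks X, fromBlocks_sub, schurCompl_fromBlocks, schurCompl_fromBlocks]
  simp only [sub_zero]
  abel

variable [Fintype p] [DecidableEq p]

theorem inv_toBlocks_of_isUnit {X : Matrix (m ⊕ p) (m ⊕ p) α} (hX : IsUnit X)
    (h₁₁ : IsUnit X.toBlocks₁₁) :
    (X⁻¹).toBlocks₁₁ = X.toBlocks₁₁⁻¹ +
        X.toBlocks₁₁⁻¹ * X.toBlocks₁₂ * X.schurCompl⁻¹ * X.toBlocks₂₁ * X.toBlocks₁₁⁻¹ ∧
      (X⁻¹).toBlocks₂₂ = X.schurCompl⁻¹ := by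
  let := hX.invertible
  let := h₁₁.invertible
  let : Invertible (fromBlocks X.toBlocks₁₁ X.toBlocks₁₂ X.toBlocks₂₁ X.toBlocks₂₂) :=
    (fromBlocks_toBlocks X).symm ▸ ‹Invertible X›
  let := invertibleOfFromBlocks₁₁Invertible X.toBlocks₁₁ X.toBlocks₁₂ X.toBlocks₂₁ X.toBlocks₂₂
  have h := invOf_fromBlocks₁₁_eq X.toBlocks₁₁ X.toBlocks₁₂ X.toBlocks₂₁ X.toBlocks₂₂
  simp only [invOf_eq_nonsing_inv, fromBlocks_toBlocks] at h
  rw [h, toBlocks_fromBlocks₁₁, toBlocks_fromBlocks₂₂]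
  exact ⟨rfl, rfl⟩

end SchurComplement

section PosDef

variable {𝕜 : Type*} [RCLike 𝕜] {m p : Type*} {X : Matrix (m ⊕ p) (m ⊕ p) 𝕜}

theorem PosDef.toBlocks₁₁ (hX : X.PosDef) : X.toBlocks₁₁.PosDef :=
  hX.submatrix Sum.inl_injective

theorem PosDef.toBlocks₂₂ (hX : X.PosDef) : X.toBlocks₂₂.PosDef :=
  hX.submatrix Sum.inr_injective

theorem IsHermitian.toBlocks₂₁_eq (hX : X.IsHermitian) : X.toBlocks₂₁ = X.toBlocks₁₂ᴴ := by
  ext i j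
  exact (hX.apply _ _).symm

variable [Fintype m] [DecidableEq m] [Fintype p]

theorem PosDef.toBlocks₂₂_sub_schurCompl (hX : X.PosDef) :
    (X.toBlocks₂₂ - X.schurCompl).PosSemidef := by
  rw [schurCompl, sub_sub_cancel, hX.1.toBlocks₂₁_eq]
  exact hX.toBlocks₁₁.inv.posSemidef.conjTranspose_mul_mul_same _

variable [DecidableEq p]

theorem PosDef.inv_toBlocks₂₂_inv (hX : X.PosDef) : ((X⁻¹).toBlocks₂₂)⁻¹ = X.schurCompl := by
  have h := (inv_toBlocks_of_isUnit hX.isUnit hX.toBlocks₁₁.isUnit).2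
  have hS : IsUnit X.schurCompl := isUnit_nonsing_inv_iff.mp (h ▸ hX.inv.toBlocks₂₂.isUnit)
  rw [h, nonsing_inv_nonsing_inv _ ((isUnit_iff_isUnit_det _).mp hS)]

theorem PosDef.schurCompl_posDef (hX : X.PosDef) : X.schurCompl.PosDef :=
  hX.inv_toBlocks₂₂_inv ▸ hX.inv.toBlocks₂₂.inv

theorem PosDef.inv_toBlocks₁₁_sub (hX : X.PosDef) :
    ((X⁻¹).toBlocks₁₁ - X.toBlocks₁₁⁻¹).PosSemidef := by
  rw [(inv_toBlocks_of_isUnit hX.isUnit hX.toBlocks₁₁.isUnit).1, add_sub_cancel_left,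
    hX.1.toBlocks₂₁_eq]
  have h := hX.schurCompl_posDef.inv.posSemidef.mul_mul_conjTranspose_same
    (X.toBlocks₁₁⁻¹ * X.toBlocks₁₂)
  rwa [conjTranspose_mul, hX.toBlocks₁₁.inv.1.eq, ← Matrix.mul_assoc] at h

theorem PosDef.toBlocks₂₂_eq_inv {A : Matrix m m 𝕜} {D : Matrix p p 𝕜} (hX : X.PosDef)
    (h : X⁻¹ = fromBlocks A 0 0 D) : X.toBlocks₂₂ = D⁻¹ := by
  have h₂₂ := hX.inv.inv_toBlocks₂₂_inv
  rw [nonsing_inv_nonsing_inv _ ((isUnit_iff_isUnit_det _).mp hX.isUnit), h,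
    schurCompl_fromBlocks] at h₂₂
  simp only [Matrix.zero_mul, sub_zero] at h₂₂
  rw [← h₂₂, nonsing_inv_nonsing_inv _ ((isUnit_iff_isUnit_det _).mp hX.toBlocks₂₂.isUnit)]

end PosDef

theorem inv_real_smul_one {𝕜 : Type*} [RCLike 𝕜] {m : Type*} [Fintype m] [DecidableEq m]
    {c : ℝ} (hc : c ≠ 0) : (c • 1 : Matrix m m 𝕜)⁻¹ = c⁻¹ • 1 := by
  refine inv_eq_right_inv ?_
  rw [smul_mul_smul_comm, mul_inv_cancel₀ hc, Matrix.one_mul, one_smul]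

end Matrix

open Matrix

section LowerBlocks

variable {n d : ℕ}

theorem lowA_eq_fromBlocks (Mi Ni : Matrix (Fin d) (Fin (2 * n * d)) ℂ) :
    lowA Mi Ni = fromBlocks 0 0 0 (fromBlocks 0 Miᴴ Ni 0) := by
  ext (p | p | p) (q | q | q) <;> rfl

theorem lowA0_eq_fromBlocks (a₀ : Matrix (Fin d) (Fin d) ℂ) :
    lowA0 n a₀ = fromBlocks 0
      (fromCols 0 ((Real.sqrt ((n : ℝ) + 1))⁻¹ • a₀ᴴ))
      (fromRows 0 ((Real.sqrt ((n : ℝ) + 1))⁻¹ • a₀)) 0 := by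
  ext (p | p | p) (q | q | q) <;> rfl

theorem exists_inv_eq_fromBlocks_of_lowF_eq {M N : Fin n → Matrix (Fin d) (Fin (2 * n * d)) ℂ}
    {Z : Matrix (S3 n d) (S3 n d) ℂ} {lam : ℝ} (hF : lowF M N Z = lam • 1) :
    ∃ Y, Z⁻¹ = fromBlocks (lam • 1) 0 0 Y ∧
      Y.toBlocks₁₁ = lam • 1 - ∑ j, (N j)ᴴ * Z.toBlocks₂₂.toBlocks₂₂ * N j ∧
      Y.toBlocks₂₂ = lam • 1 - ∑ i, M i * Z.toBlocks₂₂.toBlocks₁₁ * (M i)ᴴ := by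
  refine ⟨lam • 1 - ∑ i, (fromBlocks 0 (M i)ᴴ (N i) 0)ᴴ * Z.toBlocks₂₂ *
    fromBlocks 0 (M i)ᴴ (N i) 0, ?_, ?_, ?_⟩ <;>
  simp only [conjTranspose_antidiag_mul_mul, sum_fromBlocks, smul_one_eq_fromBlocks,
    fromBlocks_sub, toBlocks_fromBlocks₁₁, toBlocks_fromBlocks₂₂]
  rw [eq_sub_of_add_eq hF]
  simp only [lowA_eq_fromBlocks, conjTranspose_fromBlocks_zero_mul_mul,
    conjTranspose_antidiag_mul_mul, sum_fromBlocks, Finset.sum_const_zero,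
    smul_one_eq_fromBlocks, fromBlocks_sub, sub_zero]

theorem schurCompl_fromBlocks_sub_lowA0 {lam : ℝ} (hlam : lam ≠ 0)
    (Y : Matrix (Fin (2 * n * d) ⊕ Fin d) (Fin (2 * n * d) ⊕ Fin d) ℂ)
    (a₀ : Matrix (Fin d) (Fin d) ℂ) :
    schurCompl (fromBlocks (lam • 1) 0 0 Y - lowA0 n a₀) =
      Y - fromBlocks 0 0 0 ((lam⁻¹ * ((n : ℝ) + 1)⁻¹) • (a₀ * a₀ᴴ)) := by
  rw [lowA0_eq_fromBlocks, fromBlocks_sub, schurCompl_fromBlocks, sub_zero, sub_zero,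
    inv_real_smul_one hlam]
  simp only [zero_sub, Matrix.neg_mul, Matrix.mul_neg, Matrix.mul_smul, Matrix.mul_one,
    Matrix.smul_mul, fromRows_mul_fromCols, Matrix.mul_zero, Matrix.zero_mul, smul_smul,
    smul_zero, smul_neg, neg_neg]
  rw [← mul_inv, Real.mul_self_sqrt (by positivity), fromBlocks_smul, smul_smul]
  simp only [smul_zero]

end LowerBlocks

theorem schur_reduction_lower_general (n d : ℕ)
    (a₀ : Matrix (Fin d) (Fin d) ℂ)
    (M N : Fin n → Matrix (Fin d) (Fin (2 * n * d)) ℂ)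
    (lam : ℝ) (hlam : 0 < lam)
    (Z : Matrix (S3 n d) (S3 n d) ℂ) (hZ : Z.PosDef)
    (hZA : (Z⁻¹ - lowA0 n a₀).PosDef)
    (hF : lowF M N Z = lam • 1)
    (z : Matrix (Fin d) (Fin d) ℂ)
    (hz : z = Z.submatrix (Sum.inr ∘ Sum.inr) (Sum.inr ∘ Sum.inr)) :
    z.PosDef ∧
    (z⁻¹ - (lam⁻¹ * ((n : ℝ) + 1)⁻¹) • (a₀ * a₀ᴴ)).PosDef ∧
    (lam • 1 - ∑ j, (N j)ᴴ * z * N j).PosDef ∧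
    (lam • 1 - (z⁻¹ +
      ∑ i, M i * (lam • 1 - ∑ j, (N j)ᴴ * z * N j)⁻¹ * (M i)ᴴ)).PosSemidef := by
  obtain ⟨Y, hZinv, hY₁₁, hY₂₂⟩ := exists_inv_eq_fromBlocks_of_lowF_eq hF
  have hY : Y.PosDef := by simpa only [hZinv, toBlocks_fromBlocks₂₂] using hZ.inv.toBlocks₂₂
  have hZY : Z.toBlocks₂₂ = Y⁻¹ := hZ.toBlocks₂₂_eq_inv hZinv
  have hzY : z = (Y⁻¹).toBlocks₂₂ := by rw [hz, ← hZY]; rfl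
  rw [hZY, ← hzY] at hY₁₁
  rw [hZY] at hY₂₂
  have hzinv : z⁻¹ = Y.schurCompl := hzY ▸ hY.inv_toBlocks₂₂_inv
  rw [← hY₁₁]
  refine ⟨hz ▸ hZ.submatrix (Sum.inr_injective.comp Sum.inr_injective), ?_, hY.toBlocks₁₁, ?_⟩
  · have h := (hZinv ▸ hZA).schurCompl_posDef
    rw [schurCompl_fromBlocks_sub_lowA0 hlam.ne'] at h
    simpa only [schurCompl_sub_fromBlocks_zero, ← hzinv] using h.schurCompl_posDef
  · have key : lam • 1 - (z⁻¹ + ∑ i, M i * Y.toBlocks₁₁⁻¹ * (M i)ᴴ) =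
        (Y.toBlocks₂₂ - Y.schurCompl) +
          ∑ i, M i * ((Y⁻¹).toBlocks₁₁ - Y.toBlocks₁₁⁻¹) * (M i)ᴴ := by
      simp only [hY₂₂, hzinv, Matrix.mul_sub, Matrix.sub_mul, Finset.sum_sub_distrib]
      abel
    rw [key]
    exact hY.toBlocks₂₂_sub_schurCompl.add
      (posSemidef_sum _ fun i _ => hY.inv_toBlocks₁₁_sub.mul_mul_conjTranspose_same (M i))

/-- Lemma 4.2: consequences of the identity `F(Z) = λ·1` for the bottom-right block `z` of
an admissible `Z`. -/
theorem schur_reduction_lower (n d : ℕ)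
    (a₀ : Matrix (Fin d) (Fin d) ℂ) (ha₀ : IsUnit a₀)
    (M N : Fin n → Matrix (Fin d) (Fin (2 * n * d)) ℂ)
    (lam : ℝ) (hlam : 0 < lam)
    (Z : Matrix (S3 n d) (S3 n d) ℂ) (hZ : Z.PosDef)
    (hZA : (Z⁻¹ - lowA0 n a₀).PosDef)
    (hF : lowF M N Z = lam • 1)
    (z : Matrix (Fin d) (Fin d) ℂ)
    (hz : z = Z.submatrix (Sum.inr ∘ Sum.inr) (Sum.inr ∘ Sum.inr)) :
    z.PosDef ∧
    (z⁻¹ - (lam⁻¹ * ((n : ℝ) + 1)⁻¹) • (a₀ * a₀ᴴ)).PosDef ∧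
    (lam • 1 - ∑ j, (N j)ᴴ * z * N j).PosDef ∧
    (lam • 1 - (z⁻¹ +
      ∑ i, M i * (lam • 1 - ∑ j, (N j)ᴴ * z * N j)⁻¹ * (M i)ᴴ)).PosSemidef :=
  schur_reduction_lower_general n d a₀ M N lam hlam Z hZ hZA hF z hz
end
end

section
/- Let n,d,m ≥ 1, a₀ ∈ ℂ^{d×d}, a₁,…,aₙ ∈ ℂ^{d×m}, and assume M₁,…,Mₙ,N₁,…,Nₙ ∈ ℂ^{d×2nd} satisfy MᵢMⱼ* = NᵢNⱼ* = δ_{ij}·a₀a₀*/(n+1) − aᵢaⱼ* and MᵢNⱼ* = −aᵢaⱼ* for all i,j ∈ {1,…,n}. Let z ∈ ℂ^{d×d} be Hermitian and invertible with z⁻¹ > a₀a₀*/(n+1). Then Σ_{j=1}^n Nⱼ* z Nⱼ < 1, and Σ_{i=1}^n Mᵢ ( 1 − Σ_{j=1}^n Nⱼ* z Nⱼ )⁻¹ Mᵢ* = (n/(n+1))·a₀a₀* − Σ_{i=1}^n aᵢ ( 1 + Σ_{j=1}^n aⱼ* ( z⁻¹ − a₀a₀*/(n+1) )⁻¹ aⱼ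 )⁻¹ aᵢ*. -/
open scoped ComplexOrder Matrix

/-!
Stack the blocks into block columns `X = [N₁; …; Nₙ]`, `Y = [M₁; …; Mₙ]`, `A = [a₁; …; aₙ]`, and
put `Z = z ⊗ 1`, `C = c ⊗ 1`, `W = (z⁻¹ - c) ⊗ 1` with `c = a₀a₀*/(n+1)`. The hypotheses read
`XX* = YY* = C - AA*` and `YX* = -AA*`, and `∑ⱼ Nⱼ* z Nⱼ = X*ZX`. Hence `S := Z⁻¹ - XX* = W + AA*` is
positive definite, and the push-through identity `(1 - X*ZX)⁻¹ = 1 + X*S⁻¹X` shows both that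
`1 - X*ZX` is the inverse of a positive definite matrix and that
`Y(1 - X*ZX)⁻¹Y* = C - AA* + AA*S⁻¹AA*`. The Woodbury identity turns `A*S⁻¹A` into
`1 - (1 + A*W⁻¹A)⁻¹`; summing the diagonal blocks gives the formula.
-/

open scoped Kronecker

namespace Matrix

variable {k l m n o p : Type*} {α : Type*}

/-- The block index comes second, as in `D ⊗ₖ 1` and `blockDiagonal`. -/
def blockCol (X : o → Matrix m n α) : Matrix (m × o) n α :=
  of fun r => X r.2 r.1

section Semiring

theorem blockCol_mul [Fintype n] [NonUnitalNonAssocSemiring α] (X : o → Matrix m n α)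
    (T : Matrix n p α) : blockCol X * T = blockCol fun i => X i * T :=
  rfl

variable [Semiring α] [StarRing α]

theorem blockCol_mul_conjTranspose_blockCol_apply [Fintype n]
    (X : o → Matrix m n α) (Y : o → Matrix p n α) (k : m) (i : o) (l : p) (j : o) :
    (blockCol X * (blockCol Y)ᴴ) (k, i) (l, j) = (X i * (Y j)ᴴ) k l := by
  simp [blockCol, mul_apply]

theorem blockDiag_blockCol_mul_mul_conjTranspose_blockCol [Fintype n] [Fintype l]
    (X : o → Matrix m n α) (T : Matrix n l α) (Y : o → Matrix p l α) (i : o) :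
    blockDiag (blockCol X * T * (blockCol Y)ᴴ) i = X i * T * (Y i)ᴴ := by
  ext k l
  rw [blockDiag_apply, blockCol_mul, blockCol_mul_conjTranspose_blockCol_apply]

theorem conjTranspose_blockCol_mul_kronecker_one_mul_blockCol [Fintype m] [Fintype o]
    [DecidableEq o] (X : o → Matrix m n α) (D : Matrix m m α) (Y : o → Matrix m p α) :
    (blockCol X)ᴴ * (D ⊗ₖ (1 : Matrix o o α)) * blockCol Y = ∑ i, (X i)ᴴ * D * Y i := by
  ext k l
  simp [blockCol, mul_apply, one_apply, Fintype.sum_prod_type, Matrix.sum_apply]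
  rw [Finset.sum_comm]

end Semiring

section Ring

variable [Ring α] [StarRing α] [Fintype n] [Fintype p]

theorem blockCol_mul_conjTranspose_blockCol_eq_kronecker_one_sub [DecidableEq o]
    {X Y : o → Matrix m n α} {c : Matrix m m α} {a : o → Matrix m p α}
    (h : ∀ i j, X i * (Y j)ᴴ = (if i = j then c else 0) - a i * (a j)ᴴ) :
    blockCol X * (blockCol Y)ᴴ = c ⊗ₖ (1 : Matrix o o α) - blockCol a * (blockCol a)ᴴ := by
  ext ⟨k, i⟩ ⟨l, j⟩
  rw [sub_apply, blockCol_mul_conjTranspose_blockCol_apply,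
    blockCol_mul_conjTranspose_blockCol_apply, h, kronecker_apply, one_apply]
  split_ifs <;> simp

theorem blockCol_mul_conjTranspose_blockCol_eq_neg {X Y : o → Matrix m n α}
    {a : o → Matrix m p α} (h : ∀ i j, X i * (Y j)ᴴ = -(a i * (a j)ᴴ)) :
    blockCol X * (blockCol Y)ᴴ = -(blockCol a * (blockCol a)ᴴ) := by
  ext ⟨k, i⟩ ⟨l, j⟩
  rw [neg_apply, blockCol_mul_conjTranspose_blockCol_apply,
    blockCol_mul_conjTranspose_blockCol_apply, h, neg_apply]

end Ring

theorem blockDiag_kronecker_one [MulZeroOneClass α] [DecidableEq o] (D : Matrix m n α) :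
    blockDiag (D ⊗ₖ (1 : Matrix o o α)) = fun _ => D := by
  rw [kronecker_one, blockDiag_blockDiagonal]

section Woodbury

variable [CommRing α] [Fintype k] [DecidableEq k] [Fintype l] [DecidableEq l]

theorem one_add_mul_inv_mul_mul_one_sub_mul_mul_eq_one {Z : Matrix k k α} (hZ : IsUnit Z)
    (X : Matrix k l α) (Y : Matrix l k α) (hS : IsUnit (Z⁻¹ - X * Y)) :
    (1 + Y * (Z⁻¹ - X * Y)⁻¹ * X) * (1 - Y * Z * X) = 1 := by
  have key : Y * (Z⁻¹ - X * Y)⁻¹ * X * (Y * Z * X) = Y * (Z⁻¹ - X * Y)⁻¹ * X - Y * Z * X := by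
    calc Y * (Z⁻¹ - X * Y)⁻¹ * X * (Y * Z * X)
        = Y * (Z⁻¹ - X * Y)⁻¹ * (Z⁻¹ * Z * X)
            - Y * ((Z⁻¹ - X * Y)⁻¹ * (Z⁻¹ - X * Y)) * Z * X := by
          simp only [Matrix.mul_sub, Matrix.sub_mul, Matrix.mul_assoc, sub_sub_cancel]
      _ = _ := by
          rw [nonsing_inv_mul _ ((isUnit_iff_isUnit_det _).mp hZ),
            nonsing_inv_mul _ ((isUnit_iff_isUnit_det _).mp hS), Matrix.one_mul, Matrix.mul_one]
  rw [Matrix.add_mul, Matrix.one_mul, Matrix.mul_sub, Matrix.mul_one, key]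
  abel

theorem mul_add_mul_inv_mul_eq_one_sub {W : Matrix k k α} (hW : IsUnit W) (U : Matrix k l α)
    (V : Matrix l k α) (hK : IsUnit (1 + V * W⁻¹ * U)) :
    V * (W + U * V)⁻¹ * U = 1 - (1 + V * W⁻¹ * U)⁻¹ := by
  have woodbury := add_mul_mul_inv_eq_sub W U 1 V hW isUnit_one (by simpa using hK)
  simp only [Matrix.mul_one, inv_one] at woodbury
  set G := V * W⁻¹ * U
  have hdet := (isUnit_iff_isUnit_det _).mp hK
  have hGH : G * (1 + G)⁻¹ = 1 - (1 + G)⁻¹ := by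
    rw [eq_sub_iff_add_eq]
    simpa only [Matrix.add_mul, Matrix.one_mul, add_comm] using mul_nonsing_inv _ hdet
  have hHG : (1 + G)⁻¹ * G = 1 - (1 + G)⁻¹ := by
    rw [eq_sub_iff_add_eq]
    simpa only [Matrix.mul_add, Matrix.mul_one, add_comm] using nonsing_inv_mul _ hdet
  calc V * (W + U * V)⁻¹ * U = G - G * (1 + G)⁻¹ * G := by
        simp only [woodbury, G, Matrix.mul_sub, Matrix.sub_mul, Matrix.mul_assoc]
    _ = 1 - (1 + G)⁻¹ := by
        rw [Matrix.mul_assoc, hHG, Matrix.mul_sub, Matrix.mul_one, hGH]; abel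

theorem mul_inv_one_sub_conjTranspose_mul_mul_mul_conjTranspose [StarRing α] [Fintype p]
    [DecidableEq p] {Z W C : Matrix k k α} {X Y : Matrix k l α} {A : Matrix k p α}
    (hZ : IsUnit Z) (hW : IsUnit W) (hS : IsUnit (W + A * Aᴴ))
    (hK : IsUnit (1 + Aᴴ * W⁻¹ * A)) (hXX : Z⁻¹ - X * Xᴴ = W + A * Aᴴ)
    (hYY : Y * Yᴴ = C - A * Aᴴ) (hYX : Y * Xᴴ = -(A * Aᴴ)) :
    Y * (1 - Xᴴ * Z * X)⁻¹ * Yᴴ = C - A * (1 + Aᴴ * W⁻¹ * A)⁻¹ * Aᴴ := by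
  have hinv : (1 - Xᴴ * Z * X)⁻¹ = 1 + Xᴴ * (W + A * Aᴴ)⁻¹ * X := by
    refine inv_eq_left_inv ?_
    simpa only [hXX] using one_add_mul_inv_mul_mul_one_sub_mul_mul_eq_one hZ X Xᴴ (hXX ▸ hS)
  have hXY : X * Yᴴ = -(A * Aᴴ) := by
    rw [← conjTranspose_conjTranspose X, ← conjTranspose_mul, hYX, conjTranspose_neg,
      conjTranspose_mul, conjTranspose_conjTranspose]
  calc Y * (1 - Xᴴ * Z * X)⁻¹ * Yᴴ
      = Y * Yᴴ + Y * Xᴴ * (W + A * Aᴴ)⁻¹ * (X * Yᴴ) := by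
        rw [hinv]
        simp only [Matrix.mul_add, Matrix.add_mul, Matrix.mul_one, Matrix.mul_assoc]
    _ = C - A * Aᴴ + A * (Aᴴ * (W + A * Aᴴ)⁻¹ * A) * Aᴴ := by
        simp only [hYY, hYX, hXY, Matrix.neg_mul, Matrix.mul_neg, neg_neg, Matrix.mul_assoc]
    _ = C - A * (1 + Aᴴ * W⁻¹ * A)⁻¹ * Aᴴ := by
        rw [mul_add_mul_inv_mul_eq_one_sub hW A Aᴴ hK, Matrix.mul_sub, Matrix.sub_mul,
          Matrix.mul_one]
        abel

end Woodbury

section RCLike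

variable {𝕜 : Type*} [RCLike 𝕜] [Fintype k] [DecidableEq k] [Fintype l] [DecidableEq l]

theorem PosDef.one_sub_conjTranspose_mul_mul {Z : Matrix k k 𝕜} (hZ : IsUnit Z)
    (X : Matrix k l 𝕜) (h : (Z⁻¹ - X * Xᴴ).PosDef) : (1 - Xᴴ * Z * X).PosDef := by
  rw [← inv_eq_right_inv (one_add_mul_inv_mul_mul_one_sub_mul_mul_eq_one hZ X Xᴴ h.isUnit)]
  exact (PosDef.one.add_posSemidef (h.inv.posSemidef.conjTranspose_mul_mul_same X)).inv

theorem lower_woodbury_stacked [Fintype p] [DecidableEq p] {Z W C : Matrix k k 𝕜}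
    {X Y : Matrix k l 𝕜} {A : Matrix k p 𝕜} (hZ : IsUnit Z) (hW : W.PosDef)
    (hZinv : Z⁻¹ = W + C) (hXX : X * Xᴴ = C - A * Aᴴ) (hYY : Y * Yᴴ = C - A * Aᴴ)
    (hYX : Y * Xᴴ = -(A * Aᴴ)) :
    (1 - Xᴴ * Z * X).PosDef ∧
      Y * (1 - Xᴴ * Z * X)⁻¹ * Yᴴ = C - A * (1 + Aᴴ * W⁻¹ * A)⁻¹ * Aᴴ := by
  have hS : (W + A * Aᴴ).PosDef := hW.add_posSemidef (posSemidef_self_mul_conjTranspose A)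
  have hK : (1 + Aᴴ * W⁻¹ * A).PosDef :=
    PosDef.one.add_posSemidef (hW.inv.posSemidef.conjTranspose_mul_mul_same A)
  have hS' : Z⁻¹ - X * Xᴴ = W + A * Aᴴ := by rw [hZinv, hXX]; abel
  exact ⟨PosDef.one_sub_conjTranspose_mul_mul hZ X (hS' ▸ hS),
    mul_inv_one_sub_conjTranspose_mul_mul_mul_conjTranspose hZ hW.isUnit hS.isUnit hK.isUnit
      hS' hYY hYX⟩

end RCLike

end Matrix

open Matrix

theorem lower_woodbury_general (n d m : ℕ)
    (a₀ : Matrix (Fin d) (Fin d) ℂ)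
    (a : Fin n → Matrix (Fin d) (Fin m) ℂ)
    (M N : Fin n → Matrix (Fin d) (Fin (2 * n * d)) ℂ)
    (hMM : ∀ i j, M i * (M j)ᴴ =
      (if i = j then (((n : ℝ) + 1)⁻¹) • (a₀ * a₀ᴴ) else 0) - a i * (a j)ᴴ)
    (hNN : ∀ i j, N i * (N j)ᴴ =
      (if i = j then (((n : ℝ) + 1)⁻¹) • (a₀ * a₀ᴴ) else 0) - a i * (a j)ᴴ)
    (hMN : ∀ i j, M i * (N j)ᴴ = -(a i * (a j)ᴴ))
    (z : Matrix (Fin d) (Fin d) ℂ) (hzu : IsUnit z)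
    (hza : (z⁻¹ - (((n : ℝ) + 1)⁻¹) • (a₀ * a₀ᴴ)).PosDef) :
    (1 - ∑ j, (N j)ᴴ * z * N j).PosDef ∧
    ∑ i, M i * (1 - ∑ j, (N j)ᴴ * z * N j)⁻¹ * (M i)ᴴ =
      ((n : ℝ) / ((n : ℝ) + 1)) • (a₀ * a₀ᴴ) -
        ∑ i, a i * (1 + ∑ j, (a j)ᴴ *
          (z⁻¹ - (((n : ℝ) + 1)⁻¹) • (a₀ * a₀ᴴ))⁻¹ * a j)⁻¹ * (a i)ᴴ := by
  set c := ((n : ℝ) + 1)⁻¹ • (a₀ * a₀ᴴ)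
  set W := z⁻¹ - c
  have hZinv : (z ⊗ₖ (1 : Matrix (Fin n) (Fin n) ℂ))⁻¹ = W ⊗ₖ 1 + c ⊗ₖ 1 := by
    rw [inv_kronecker, inv_one, ← add_kronecker, sub_add_cancel]
  have hG : ∑ j, (a j)ᴴ * W⁻¹ * a j =
      (blockCol a)ᴴ * (W ⊗ₖ (1 : Matrix (Fin n) (Fin n) ℂ))⁻¹ * blockCol a := by
    rw [inv_kronecker, inv_one, conjTranspose_blockCol_mul_kronecker_one_mul_blockCol]
  obtain ⟨hpos, hstacked⟩ := lower_woodbury_stacked (hzu.kronecker isUnit_one)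
    (hza.kronecker PosDef.one) hZinv (blockCol_mul_conjTranspose_blockCol_eq_kronecker_one_sub hNN)
    (blockCol_mul_conjTranspose_blockCol_eq_kronecker_one_sub hMM)
    (blockCol_mul_conjTranspose_blockCol_eq_neg hMN)
  rw [← conjTranspose_blockCol_mul_kronecker_one_mul_blockCol]
  refine ⟨hpos, ?_⟩
  rw [← Finset.sum_congr rfl fun i _ => blockDiag_blockCol_mul_mul_conjTranspose_blockCol M _ M i,
    hstacked]
  simp only [blockDiag_sub, Pi.sub_apply, blockDiag_kronecker_one,
    blockDiag_blockCol_mul_mul_conjTranspose_blockCol, Finset.sum_sub_distrib, hG]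
  rw [Finset.sum_const, Finset.card_univ, Fintype.card_fin, ← Nat.cast_smul_eq_nsmul ℝ, smul_smul,
    ← div_eq_mul_inv]

/-- Lemma 4.5: for Hermitian invertible `z` with `z⁻¹ > a₀a₀*/(n+1)` one has
`∑ⱼ Nⱼ* z Nⱼ < 1` and the matrix-inversion identity expressing
`∑ᵢ Mᵢ (1 − ∑ⱼ Nⱼ* z Nⱼ)⁻¹ Mᵢ*` in terms of `a₀,…,aₙ`. -/
theorem lower_woodbury (n d m : ℕ) (hn : 1 ≤ n) (hd : 1 ≤ d) (hm : 1 ≤ m)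
    (a₀ : Matrix (Fin d) (Fin d) ℂ)
    (a : Fin n → Matrix (Fin d) (Fin m) ℂ)
    (M N : Fin n → Matrix (Fin d) (Fin (2 * n * d)) ℂ)
    (hMM : ∀ i j, M i * (M j)ᴴ =
      (if i = j then (((n : ℝ) + 1)⁻¹) • (a₀ * a₀ᴴ) else 0) - a i * (a j)ᴴ)
    (hNN : ∀ i j, N i * (N j)ᴴ =
      (if i = j then (((n : ℝ) + 1)⁻¹) • (a₀ * a₀ᴴ) else 0) - a i * (a j)ᴴ)
    (hMN : ∀ i j, M i * (N j)ᴴ = -(a i * (a j)ᴴ))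
    (z : Matrix (Fin d) (Fin d) ℂ) (hz : z.IsHermitian) (hzu : IsUnit z)
    (hza : (z⁻¹ - (((n : ℝ) + 1)⁻¹) • (a₀ * a₀ᴴ)).PosDef) :
    (1 - ∑ j, (N j)ᴴ * z * N j).PosDef ∧
    ∑ i, M i * (1 - ∑ j, (N j)ᴴ * z * N j)⁻¹ * (M i)ᴴ =
      ((n : ℝ) / ((n : ℝ) + 1)) • (a₀ * a₀ᴴ) -
        ∑ i, a i * (1 + ∑ j, (a j)ᴴ *
          (z⁻¹ - (((n : ℝ) + 1)⁻¹) • (a₀ * a₀ᴴ))⁻¹ * a j)⁻¹ * (a i)ᴴ :=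
  lower_woodbury_general n d m a₀ a M N hMM hNN hMN z hzu hza
end
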